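/- arXiv:2202.09060 — 2 statements merged into one kernel-verified Lean document; each statement's English description precedes it below -/
import Mathlib

section
/- Suppose W is diagonalizable over ℂ: there exist linearly independent row vectors v_1, …, v_N ∈ ℂ^{1×N} and λ_1, …, λ_N ∈ ℂ with v_i·W = λ_i·v_i for all i, and suppose E_{λ_i} is invertible for every i. Then the networked sampled-data system (Φ_s, Ψ_s) is controllable if and only if the following three conditions hold: (1) the pair (W, Δ) satisfies the PBH condition; (2) for every i = 1, …, N the pair (E_{λ_i}, 𝓑(h)) satisfies the PBH condition; (3) for every θ ∈ ℂ and every family of row vectors ξ_1, …, ξ_N ∈ ℂ^{1×n} with ξ_i·(θI − E_{λ_i}) = 0 for all i and not all ξ_i zero, one has (Σ_{i=1}^{N} v_i ⊗ ξ_i)·(Δ ⊗ 𝓑(h)) ≠ 0. -/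
open Matrix
open scoped Kronecker

/-- Entrywise complexification of a real matrix. -/
noncomputable def cpx {a b : Type*} (M : Matrix a b ℝ) : Matrix a b ℂ :=
  M.map (Complex.ofReal)

/-- The matrix exponential `e^{M}`. -/
noncomputable def mexp {q : Type*} [Fintype q] [DecidableEq q]
    (M : Matrix q q ℝ) : Matrix q q ℝ :=
  NormedSpace.exp M

/-- The entrywise integral `∫₀ʰ e^{Aτ} dτ`. -/
noncomputable def intExp {q : Type*} [Fintype q] [DecidableEq q]
    (A : Matrix q q ℝ) (h : ℝ) : Matrix q q ℝ :=
  Matrix.of fun i j => ∫ τ in (0:ℝ)..h, (NormedSpace.exp (τ • A)) i j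

/-- `θ` is an eigenvalue of the complex square matrix `M`. -/
def IsEig {q : Type*} [Fintype q] [DecidableEq q] (M : Matrix q q ℂ) (θ : ℂ) : Prop :=
  (θ • (1 : Matrix q q ℂ) - M).det = 0

/-- PBH condition for a pair of complex matrices: for every `s ∈ ℂ`, the only row
vector `v` with `v (sI - M) = 0` and `v G = 0` is `v = 0`. -/
def PBH {q r : Type*} [Fintype q] [DecidableEq q] [Fintype r]
    (M : Matrix q q ℂ) (G : Matrix q r ℂ) : Prop :=
  ∀ (s : ℂ) (v : q → ℂ), v ᵥ* (s • (1 : Matrix q q ℂ) - M) = 0 → v ᵥ* G = 0 → v = 0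

/-- Controllability of a discrete-time linear system `x⁺ = F x + G u`:
every state can be steered to the origin in finitely many steps. -/
def Controllable {q r : Type*} [Fintype q] [DecidableEq q] [Fintype r]
    (F : Matrix q q ℝ) (G : Matrix q r ℝ) : Prop :=
  ∀ x : q → ℝ, ∃ (k : ℕ) (u : Fin k → r → ℝ),
    (F ^ k) *ᵥ x + ∑ j : Fin k, (F ^ (k - 1 - (j : ℕ))) *ᵥ (G *ᵥ u j) = 0

/-- `𝓑(h) = (∫₀ʰ e^{Aτ} dτ)·B`. -/
noncomputable def sampB {n p : ℕ} (A : Matrix (Fin n) (Fin n) ℝ)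
    (B : Matrix (Fin n) (Fin p) ℝ) (h : ℝ) : Matrix (Fin n) (Fin p) ℝ :=
  intExp A h * B

/-- `𝓗(h) = (∫₀ʰ e^{Aτ} dτ)·H·C`. -/
noncomputable def sampH {n m : ℕ} (A : Matrix (Fin n) (Fin n) ℝ)
    (H : Matrix (Fin n) (Fin m) ℝ) (C : Matrix (Fin m) (Fin n) ℝ) (h : ℝ) :
    Matrix (Fin n) (Fin n) ℝ :=
  intExp A h * H * C

/-- `Φ_s = I_N ⊗ e^{Ah} + W ⊗ 𝓗(h)`. -/
noncomputable def Phis {n m N : ℕ} (A : Matrix (Fin n) (Fin n) ℝ)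
    (H : Matrix (Fin n) (Fin m) ℝ) (C : Matrix (Fin m) (Fin n) ℝ)
    (W : Matrix (Fin N) (Fin N) ℝ) (h : ℝ) :
    Matrix (Fin N × Fin n) (Fin N × Fin n) ℝ :=
  (1 : Matrix (Fin N) (Fin N) ℝ) ⊗ₖ mexp (h • A) + W ⊗ₖ sampH A H C h

/-- `E_λ = e^{Ah} + λ·𝓗(h)` (complexified). -/
noncomputable def Emat {n m : ℕ} (A : Matrix (Fin n) (Fin n) ℝ)
    (H : Matrix (Fin n) (Fin m) ℝ) (C : Matrix (Fin m) (Fin n) ℝ)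
    (h : ℝ) (lam : ℂ) : Matrix (Fin n) (Fin n) ℂ :=
  cpx (mexp (h • A)) + lam • cpx (sampH A H C h)

/-!
Since the left eigenvectors `vᵢ` of `W` form a basis, every row vector on the state space of the
network is `Σ vᵢ ⊗ ξᵢ`, and `(Σ vᵢ ⊗ ξᵢ)(θI - Φ_s) = Σ vᵢ ⊗ ξᵢ(θI - E_{λᵢ})`: `Φ_s` is
block-diagonal with blocks `E_{λᵢ}`. Hence `Φ_s` is invertible, and the PBH condition for
`(Φ_s, Ψ_s)` is literally condition (3); testing it on `u ⊗ ξ`, with `u` a left eigenvector of `W`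
and `ξ` one of `E_λ`, gives (1) and (2).

For invertible `F`, controllability of `(F, G)` is the PBH condition (Hautus): the row vectors
killing every `F^i G` form a subspace invariant under `w ↦ wF`. It vanishes iff the reachable
subspaces, which eventually stabilise, fill the state space, and iff it contains no left
eigenvector of `F`.
Invertibility matters since controllability means steering to the origin.
-/

section Krylov

variable {K : Type*} [Field K] {q r : Type*} [Fintype q] [DecidableEq q]

lemma vecMul_smul_one_sub_eq_zero_iff {M : Matrix q q K} {s : K} {w : q → K} :
    w ᵥ* (s • (1 : Matrix q q K) - M) = 0 ↔ w ᵥ* M = s • w := by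
  rw [vecMul_sub, vecMul_smul, vecMul_one, sub_eq_zero, eq_comm]

lemma vecMul_pow_of_vecMul_eq_smul {M : Matrix q q K} {s : K} {w : q → K}
    (hw : w ᵥ* M = s • w) (i : ℕ) : w ᵥ* M ^ i = s ^ i • w := by
  induction i with
  | zero => simp
  | succ i ih => rw [pow_succ, ← vecMul_vecMul, ih, smul_vecMul, hw, smul_smul, pow_succ]

def krylovAnnihilator (F : Matrix q q K) (G : Matrix q r K) : Submodule K (q → K) where
  carrier := {w | ∀ i : ℕ, w ᵥ* (F ^ i * G) = 0}
  add_mem' ha hb i := by rw [add_vecMul, ha i, hb i, add_zero]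
  zero_mem' _ := zero_vecMul _
  smul_mem' c _ hw i := by rw [smul_vecMul, hw i, smul_zero]

variable {F : Matrix q q K} {G : Matrix q r K}

lemma mem_krylovAnnihilator {w : q → K} :
    w ∈ krylovAnnihilator F G ↔ ∀ i : ℕ, w ᵥ* (F ^ i * G) = 0 :=
  Iff.rfl

lemma vecMul_mem_krylovAnnihilator {w : q → K} (hw : w ∈ krylovAnnihilator F G) :
    w ᵥ* F ∈ krylovAnnihilator F G := fun i => by
  rw [vecMul_vecMul, ← Matrix.mul_assoc, ← pow_succ']
  exact hw (i + 1)

lemma exists_mem_krylovAnnihilator_vecMul_pow_eq (hF : IsUnit F) (k : ℕ) {w : q → K}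
    (hw : w ∈ krylovAnnihilator F G) : ∃ y ∈ krylovAnnihilator F G, y ᵥ* F ^ k = w := by
  set φ := (vecMulLinear F).restrict fun _ => vecMul_mem_krylovAnnihilator (F := F) (G := G)
  have hφ : Function.Surjective φ := LinearMap.injective_iff_surjective.mp fun y z hyz =>
    Subtype.ext (vecMul_injective_iff_isUnit.mpr hF (congrArg Subtype.val hyz))
  induction k generalizing w with
  | zero => exact ⟨w, hw, by simp⟩
  | succ k ih =>
    obtain ⟨y, hy, rfl⟩ := ih hw
    obtain ⟨⟨z, hz⟩, hzy⟩ := hφ ⟨y, hy⟩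
    refine ⟨z, hz, ?_⟩
    have hzy' : z ᵥ* F = y := congrArg Subtype.val hzy
    rw [pow_succ', ← vecMul_vecMul, hzy']

end Krylov

section PBH

variable {q r : Type*} [Fintype q] [DecidableEq q] [Fintype r]

lemma krylovAnnihilator_eq_bot_iff_pbh (F : Matrix q q ℂ) (G : Matrix q r ℂ) :
    krylovAnnihilator F G = ⊥ ↔ PBH F G := by
  constructor
  · intro h s w hs hG
    rw [vecMul_smul_one_sub_eq_zero_iff] at hs
    rw [← Submodule.mem_bot ℂ, ← h]
    intro i
    rw [← vecMul_vecMul, vecMul_pow_of_vecMul_eq_smul hs, smul_vecMul, hG, smul_zero]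
  · intro hpbh
    by_contra hne
    have : Nontrivial (krylovAnnihilator F G) := Submodule.nontrivial_iff_ne_bot.mpr hne
    obtain ⟨μ, hμ⟩ := Module.End.exists_eigenvalue
      ((vecMulLinear F).restrict fun _ => vecMul_mem_krylovAnnihilator (F := F) (G := G))
    obtain ⟨⟨w, hw⟩, hwμ⟩ := hμ.exists_hasEigenvector
    have hwF : w ᵥ* F = μ • w := congrArg Subtype.val hwμ.apply_eq_smul
    refine hwμ.2 (Subtype.ext (hpbh μ w (vecMul_smul_one_sub_eq_zero_iff.mpr hwF) ?_))
    simpa using hw 0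

end PBH

section Reachability

variable {K : Type*} [Field K] {q r : Type*} [Fintype q] [DecidableEq q] [Fintype r]

def reachMap (F : Matrix q q K) (G : Matrix q r K) (k : ℕ) : (Fin k → r → K) →ₗ[K] q → K where
  toFun u := ∑ j : Fin k, F ^ (k - 1 - (j : ℕ)) *ᵥ (G *ᵥ u j)
  map_add' u u' := by simp [mulVec_add, Finset.sum_add_distrib]
  map_smul' c u := by simp [mulVec_smul, Finset.smul_sum]

lemma Submodule.eq_top_of_forall_dotProduct_eq_zero (S : Submodule K (q → K))
    (h : ∀ w : q → K, (∀ x ∈ S, w ⬝ᵥ x = 0) → w = 0) : S = ⊤ := by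
  by_contra hne
  obtain ⟨f, hf, hle⟩ := S.exists_le_ker_of_lt_top (lt_top_iff_ne_top.mpr hne)
  set w : q → K := fun i => f fun j => if i = j then 1 else 0
  have hfw : ∀ x, f x = w ⬝ᵥ x := fun x => by
    rw [LinearMap.pi_apply_eq_sum_univ f x]
    simp only [dotProduct, smul_eq_mul, mul_comm, w]
  refine hf (LinearMap.ext fun x => ?_)
  rw [hfw, h w fun x hx => by rw [← hfw]; exact hle hx, zero_dotProduct, LinearMap.zero_apply]

variable {F : Matrix q q K} {G : Matrix q r K}

lemma reachMap_cons (k : ℕ) (u₀ : r → K) (u : Fin k → r → K) :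
    reachMap F G (k + 1) (Fin.cons u₀ u) = (F ^ k * G) *ᵥ u₀ + reachMap F G k u := by
  simp only [reachMap, LinearMap.coe_mk, AddHom.coe_mk, Fin.sum_univ_succ, Fin.cons_zero,
    Fin.cons_succ, Fin.val_zero, Fin.val_succ, mulVec_mulVec]
  congr 1
  exact Finset.sum_congr rfl fun j _ => by rw [Nat.add_sub_cancel, Nat.sub_sub, Nat.add_comm 1]

lemma monotone_range_reachMap : Monotone fun k => LinearMap.range (reachMap F G k) := by
  refine monotone_nat_of_le_succ fun k => ?_
  rintro _ ⟨u, rfl⟩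
  exact ⟨Fin.cons 0 u, by simp [reachMap_cons]⟩

lemma pow_mul_mulVec_mem_range_reachMap (k : ℕ) (u₀ : r → K) :
    (F ^ k * G) *ᵥ u₀ ∈ LinearMap.range (reachMap F G (k + 1)) :=
  ⟨Fin.cons u₀ 0, by simp [reachMap_cons]⟩

lemma exists_range_reachMap_eq_top (h : krylovAnnihilator F G = ⊥) :
    ∃ k, LinearMap.range (reachMap F G k) = ⊤ := by
  obtain ⟨k, hk⟩ := monotone_stabilizes_iff_noetherian.mpr inferInstance
    ⟨_, monotone_range_reachMap (F := F) (G := G)⟩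
  have hk' : ∀ m, k ≤ m → LinearMap.range (reachMap F G k) = LinearMap.range (reachMap F G m) :=
    hk
  have hmem : ∀ i u₀, (F ^ i * G) *ᵥ u₀ ∈ LinearMap.range (reachMap F G k) := fun i u₀ => by
    rw [hk' (max k (i + 1)) (le_max_left _ _)]
    exact monotone_range_reachMap (le_max_right _ _) (pow_mul_mulVec_mem_range_reachMap i u₀)
  refine ⟨k, Submodule.eq_top_of_forall_dotProduct_eq_zero _ fun w hw => ?_⟩
  rw [← Submodule.mem_bot K, ← h]
  exact fun i => dotProduct_eq_zero _ fun u => by rw [← dotProduct_mulVec]; exact hw _ (hmem i u)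

end Reachability

section Complexification

variable {a b c : Type*}

lemma cpx_mul [Fintype b] (M : Matrix a b ℝ) (P : Matrix b c ℝ) :
    cpx (M * P) = cpx M * cpx P :=
  Matrix.map_mul (f := Complex.ofRealHom)

lemma cpx_pow [Fintype a] [DecidableEq a] (M : Matrix a a ℝ) (k : ℕ) : cpx (M ^ k) = cpx M ^ k :=
  map_pow Complex.ofRealHom.mapMatrix M k

lemma re_vecMul_cpx [Fintype a] (w : a → ℂ) (M : Matrix a b ℝ) (j : b) :
    ((w ᵥ* cpx M) j).re = ((fun i => (w i).re) ᵥ* M) j := by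
  simp [vecMul, dotProduct, cpx, Complex.re_sum]

lemma im_vecMul_cpx [Fintype a] (w : a → ℂ) (M : Matrix a b ℝ) (j : b) :
    ((w ᵥ* cpx M) j).im = ((fun i => (w i).im) ᵥ* M) j := by
  simp [vecMul, dotProduct, cpx, Complex.im_sum]

lemma ofReal_vecMul_cpx [Fintype a] (w : a → ℝ) (M : Matrix a b ℝ) :
    (fun i => (w i : ℂ)) ᵥ* cpx M = fun j => ((w ᵥ* M) j : ℂ) :=
  funext fun j => (RingHom.map_vecMul Complex.ofRealHom M w j).symm

end Complexification

lemma krylovAnnihilator_cpx_eq_bot_iff {q r : Type*} [Fintype q] [DecidableEq q]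
    (F : Matrix q q ℝ) (G : Matrix q r ℝ) :
    krylovAnnihilator (cpx F) (cpx G) = ⊥ ↔ krylovAnnihilator F G = ⊥ := by
  simp only [Submodule.eq_bot_iff, mem_krylovAnnihilator, ← cpx_pow, ← cpx_mul]
  constructor
  · intro h w hw
    have hw' := h (fun i => (w i : ℂ)) fun i => funext fun j => by simp [ofReal_vecMul_cpx, hw i]
    exact funext fun i => by simpa using congrFun hw' i
  · intro h w hw
    have hre := h _ fun i => funext fun j => by rw [← re_vecMul_cpx, hw i]; rfl
    have him := h _ fun i => funext fun j => by rw [← im_vecMul_cpx, hw i]; rfl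
    exact funext fun i => Complex.ext (congrFun hre i) (congrFun him i)

section Hautus

variable {q r : Type*} [Fintype q] [DecidableEq q] [Fintype r] {F : Matrix q q ℝ} {G : Matrix q r ℝ}

lemma controllable_of_krylovAnnihilator_eq_bot (h : krylovAnnihilator F G = ⊥) :
    Controllable F G := by
  obtain ⟨k, hk⟩ := exists_range_reachMap_eq_top h
  intro x
  obtain ⟨u, hu⟩ := LinearMap.range_eq_top.mp hk (-(F ^ k *ᵥ x))
  exact ⟨k, u, by rw [← add_neg_cancel (F ^ k *ᵥ x), ← hu]; rfl⟩

lemma krylovAnnihilator_eq_bot_of_controllable (hF : IsUnit F) (hc : Controllable F G) :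
    krylovAnnihilator F G = ⊥ := by
  refine (Submodule.eq_bot_iff _).mpr fun w hw => dotProduct_eq_zero _ fun x => ?_
  obtain ⟨k, u, hu⟩ := hc x
  obtain ⟨y, hy, rfl⟩ := exists_mem_krylovAnnihilator_vecMul_pow_eq hF k hw
  rw [← dotProduct_mulVec, eq_neg_of_add_eq_zero_left hu, dotProduct_neg, dotProduct_sum]
  simp [dotProduct_mulVec, hy _]

theorem controllable_iff_pbh (hF : IsUnit F) : Controllable F G ↔ PBH (cpx F) (cpx G) := by
  rw [← krylovAnnihilator_eq_bot_iff_pbh, krylovAnnihilator_cpx_eq_bot_iff]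
  exact ⟨krylovAnnihilator_eq_bot_of_controllable hF, controllable_of_krylovAnnihilator_eq_bot⟩

end Hautus

section Kronecker

variable {R : Type*} [CommRing R] {ι a b c d : Type*}

def vecKron (u : a → R) (ξ : b → R) : a × b → R := fun p => u p.1 * ξ p.2

def kronSum [Fintype ι] (v : ι → a → R) (ξ : ι → b → R) : a × b → R :=
  fun p => ∑ i, v i p.1 * ξ i p.2

def networkMatrix [DecidableEq a] (W : Matrix a a R) (E H : Matrix b b R) :
    Matrix (a × b) (a × b) R :=
  1 ⊗ₖ E + W ⊗ₖ H

lemma vecKron_eq_zero_iff [NoZeroDivisors R] {u : a → R} {ξ : b → R} :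
    vecKron u ξ = 0 ↔ u = 0 ∨ ξ = 0 := by
  constructor
  · intro h
    by_contra! hne
    obtain ⟨i, hi⟩ := Function.ne_iff.mp hne.1
    obtain ⟨j, hj⟩ := Function.ne_iff.mp hne.2
    exact mul_ne_zero hi hj (congrFun h (i, j))
  · rintro (rfl | rfl) <;> funext p <;> simp [vecKron]

@[simp]
lemma kronSum_zero_right [Fintype ι] (v : ι → a → R) : kronSum v (0 : ι → b → R) = 0 := by
  funext p
  simp [kronSum]

lemma kronSum_eq_sum [Fintype ι] (v : ι → a → R) (ξ : ι → b → R) :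
    kronSum v ξ = ∑ i, vecKron (v i) (ξ i) := by
  funext p
  simp [kronSum, vecKron]

lemma vecKron_vecMul_kronecker [Fintype a] [Fintype b] (u : a → R) (ξ : b → R)
    (P : Matrix a c R) (Q : Matrix b d R) :
    vecKron u ξ ᵥ* (P ⊗ₖ Q) = vecKron (u ᵥ* P) (ξ ᵥ* Q) := by
  funext p
  simp only [vecKron, vecMul, dotProduct, kroneckerMap_apply, Fintype.sum_prod_type,
    Finset.sum_mul_sum]
  exact Finset.sum_congr rfl fun i _ => Finset.sum_congr rfl fun j _ => by ring

lemma smul_one_sub_networkMatrix [DecidableEq a] [DecidableEq b] (θ : R) (W : Matrix a a R)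
    (E H : Matrix b b R) :
    θ • 1 - networkMatrix W E H = networkMatrix W (θ • 1 - E) (-H) := by
  ext ⟨i, j⟩ ⟨k, l⟩
  simp only [networkMatrix, Matrix.sub_apply, Matrix.add_apply, Matrix.smul_apply,
    Matrix.neg_apply, kroneckerMap_apply, one_apply, Prod.mk.injEq, smul_eq_mul]
  split_ifs <;> simp_all <;> ring

variable [Fintype a] [DecidableEq a] [Fintype b] {W : Matrix a a R}

lemma vecKron_vecMul_networkMatrix {μ : R} {u : a → R} (hu : u ᵥ* W = μ • u) (ξ : b → R)
    (E H : Matrix b b R) :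
    vecKron u ξ ᵥ* networkMatrix W E H = vecKron u (ξ ᵥ* (E + μ • H)) := by
  rw [networkMatrix, vecMul_add, vecKron_vecMul_kronecker, vecKron_vecMul_kronecker, vecMul_one,
    hu]
  funext p
  simp only [vecKron, vecMul_add, vecMul_smul, Pi.add_apply, Pi.smul_apply, smul_eq_mul]
  ring

lemma kronSum_vecMul_networkMatrix [Fintype ι] {μ : ι → R} {v : ι → a → R}
    (hv : ∀ i, v i ᵥ* W = μ i • v i) (ξ : ι → b → R) (E H : Matrix b b R) :
    kronSum v ξ ᵥ* networkMatrix W E H = kronSum v fun i => ξ i ᵥ* (E + μ i • H) := by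
  simp only [kronSum_eq_sum, sum_vecMul, vecKron_vecMul_networkMatrix (hv _)]

lemma vecKron_vecMul_smul_one_sub_networkMatrix [DecidableEq b] {μ : R} {u : a → R}
    (hu : u ᵥ* W = μ • u) (ξ : b → R) (θ : R) (E H : Matrix b b R) :
    vecKron u ξ ᵥ* (θ • 1 - networkMatrix W E H) = vecKron u (ξ ᵥ* (θ • 1 - (E + μ • H))) := by
  rw [smul_one_sub_networkMatrix, vecKron_vecMul_networkMatrix hu, smul_neg, ← sub_eq_add_neg,
    sub_sub]

lemma kronSum_vecMul_smul_one_sub_networkMatrix [Fintype ι] [DecidableEq b] {μ : ι → R}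
    {v : ι → a → R} (hv : ∀ i, v i ᵥ* W = μ i • v i) (ξ : ι → b → R) (θ : R)
    (E H : Matrix b b R) :
    kronSum v ξ ᵥ* (θ • 1 - networkMatrix W E H) =
      kronSum v fun i => ξ i ᵥ* (θ • 1 - (E + μ i • H)) := by
  simp only [smul_one_sub_networkMatrix, kronSum_vecMul_networkMatrix hv, smul_neg,
    ← sub_eq_add_neg, sub_sub]

end Kronecker

section Eigenbasis

variable {K : Type*} [Field K] {ι a b : Type*} [Fintype ι] {v : ι → a → K}

lemma eq_zero_of_kronSum_eq_zero (hv : LinearIndependent K v) {ξ : ι → b → K}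
    (h : kronSum v ξ = 0) : ξ = 0 := by
  funext i j
  refine Fintype.linearIndependent_iff.mp hv (fun i => ξ i j) (funext fun x => ?_) i
  simpa [kronSum, mul_comm] using congrFun h (x, j)

lemma exists_kronSum_eq [Fintype a] (hv : LinearIndependent K v)
    (hcard : Fintype.card ι = Fintype.card a) (z : a × b → K) :
    ∃ ξ : ι → b → K, kronSum v ξ = z := by
  have hspan := hv.span_eq_top_of_card_eq_finrank'
    (hcard.trans (Module.finrank_fintype_fun_eq_card K).symm)
  choose c hc using fun j => (Submodule.mem_span_range_iff_exists_fun K).mp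
    (hspan ▸ Submodule.mem_top (x := fun x => z (x, j)))
  refine ⟨fun i j => c j i, funext fun p => ?_⟩
  simpa [kronSum, mul_comm] using congrFun (hc p.2) p.1

lemma isUnit_networkMatrix [Fintype a] [DecidableEq a] [Fintype b] [DecidableEq b]
    {W : Matrix a a K} {μ : ι → K} (hv : LinearIndependent K v)
    (hcard : Fintype.card ι = Fintype.card a) (hW : ∀ i, v i ᵥ* W = μ i • v i)
    {E H : Matrix b b K} (hE : ∀ i, IsUnit (E + μ i • H)) :
    IsUnit (networkMatrix W E H) := by
  refine vecMul_surjective_iff_isUnit.mp fun z => ?_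
  obtain ⟨η, rfl⟩ := exists_kronSum_eq hv hcard z
  choose ξ hξ using fun i => vecMul_surjective_iff_isUnit.mpr (hE i) (η i)
  exact ⟨kronSum v ξ, (kronSum_vecMul_networkMatrix hW ξ E H).trans (by simp only [hξ])⟩

end Eigenbasis

section NetworkPBH

variable {ι a b c d : Type*} [Fintype a] [DecidableEq a] [Fintype b] [DecidableEq b]
  [Fintype c] [Fintype d] {W : Matrix a a ℂ} {E H : Matrix b b ℂ} {D : Matrix a c ℂ}
  {Bm : Matrix b d ℂ}

lemma eq_zero_or_eq_zero_of_pbh_networkMatrix (hP : PBH (networkMatrix W E H) (D ⊗ₖ Bm))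
    {μ θ : ℂ} {u : a → ℂ} {ξ : b → ℂ} (hu : u ᵥ* W = μ • u)
    (hξ : ξ ᵥ* (θ • 1 - (E + μ • H)) = 0) (hD : vecKron (u ᵥ* D) (ξ ᵥ* Bm) = 0) :
    u = 0 ∨ ξ = 0 := by
  refine vecKron_eq_zero_iff.mp (hP θ _ ?_ (by rw [vecKron_vecMul_kronecker, hD]))
  rw [vecKron_vecMul_smul_one_sub_networkMatrix hu, hξ, vecKron_eq_zero_iff]
  exact Or.inr rfl

lemma pbh_of_pbh_networkMatrix [Nonempty b] (hP : PBH (networkMatrix W E H) (D ⊗ₖ Bm)) :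
    PBH W D := by
  intro s u hs hD
  obtain ⟨θ, hθ⟩ := Module.End.exists_eigenvalue (vecMulLinear (E + s • H))
  obtain ⟨ξ, hξ⟩ := hθ.exists_hasEigenvector
  have hξE : ξ ᵥ* (θ • 1 - (E + s • H)) = 0 :=
    vecMul_smul_one_sub_eq_zero_iff.mpr hξ.apply_eq_smul
  refine (eq_zero_or_eq_zero_of_pbh_networkMatrix hP
    (vecMul_smul_one_sub_eq_zero_iff.mp hs) hξE ?_).resolve_right hξ.2
  rw [hD, vecKron_eq_zero_iff]
  exact Or.inl rfl

lemma pbh_add_smul_of_pbh_networkMatrix (hP : PBH (networkMatrix W E H) (D ⊗ₖ Bm)) {μ : ℂ}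
    {u : a → ℂ} (hu0 : u ≠ 0) (hu : u ᵥ* W = μ • u) : PBH (E + μ • H) Bm := by
  intro s ξ hξ hB
  refine (eq_zero_or_eq_zero_of_pbh_networkMatrix hP hu hξ ?_).resolve_left hu0
  rw [hB, vecKron_eq_zero_iff]
  exact Or.inr rfl

lemma pbh_networkMatrix_iff [Fintype ι] {μ : ι → ℂ} {v : ι → a → ℂ} (hv : LinearIndependent ℂ v)
    (hcard : Fintype.card ι = Fintype.card a) (hW : ∀ i, v i ᵥ* W = μ i • v i)
    {G : Matrix (a × b) c ℂ} :
    PBH (networkMatrix W E H) G ↔ ∀ θ : ℂ, ∀ ξ : ι → b → ℂ,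
      (∀ i, ξ i ᵥ* (θ • 1 - (E + μ i • H)) = 0) → (∃ i, ξ i ≠ 0) → kronSum v ξ ᵥ* G ≠ 0 := by
  constructor
  · rintro hP θ ξ hξ ⟨i, hi⟩ hG
    refine hi (congrFun (eq_zero_of_kronSum_eq_zero hv (hP θ _ ?_ hG)) i)
    rw [kronSum_vecMul_smul_one_sub_networkMatrix hW]
    simp only [hξ]
    exact kronSum_zero_right v
  · intro h θ z hz hG
    obtain ⟨ξ, rfl⟩ := exists_kronSum_eq hv hcard z
    rw [kronSum_vecMul_smul_one_sub_networkMatrix hW] at hz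
    by_contra hne
    have hξ : ∃ i, ξ i ≠ 0 := by
      by_contra! h0
      obtain rfl : ξ = 0 := funext h0
      exact hne (kronSum_zero_right v)
    exact h θ ξ (congrFun (eq_zero_of_kronSum_eq_zero hv hz)) hξ hG

end NetworkPBH

lemma isUnit_of_isUnit_cpx {q : Type*} [Fintype q] [DecidableEq q] {M : Matrix q q ℝ}
    (h : IsUnit (cpx M)) : IsUnit M := by
  rw [isUnit_iff_isUnit_det] at h ⊢
  change IsUnit (Complex.ofRealHom.mapMatrix M).det at h
  rwa [← RingHom.map_det, isUnit_map_iff] at h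

lemma cpx_kronecker {a b c d : Type*} (P : Matrix a b ℝ) (Q : Matrix c d ℝ) :
    cpx (P ⊗ₖ Q) = cpx P ⊗ₖ cpx Q := by
  ext
  simp [cpx]

lemma cpx_Phis {n m N : ℕ} (A : Matrix (Fin n) (Fin n) ℝ) (H : Matrix (Fin n) (Fin m) ℝ)
    (C : Matrix (Fin m) (Fin n) ℝ) (W : Matrix (Fin N) (Fin N) ℝ) (h : ℝ) :
    cpx (Phis A H C W h) = networkMatrix (cpx W) (cpx (mexp (h • A))) (cpx (sampH A H C h)) := by
  ext
  simp [Phis, networkMatrix, cpx, one_apply, apply_ite]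

theorem stmt5_general
    (n m p N : ℕ) (hn : 0 < n)
    (h : ℝ)
    (A : Matrix (Fin n) (Fin n) ℝ) (B : Matrix (Fin n) (Fin p) ℝ)
    (C : Matrix (Fin m) (Fin n) ℝ) (H : Matrix (Fin n) (Fin m) ℝ)
    (W : Matrix (Fin N) (Fin N) ℝ)
    (δ : Fin N → ℝ)
    (v : Fin N → Fin N → ℂ) (lam : Fin N → ℂ)
    (hvli : LinearIndependent ℂ v)
    (hev : ∀ i, v i ᵥ* cpx W = lam i • v i)
    (hE : ∀ i, IsUnit (Emat A H C h (lam i))) :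
    Controllable (Phis A H C W h) (Matrix.diagonal δ ⊗ₖ sampB A B h) ↔
      (PBH (cpx W) (cpx (Matrix.diagonal δ)) ∧
        (∀ i, PBH (Emat A H C h (lam i)) (cpx (sampB A B h))) ∧
        (∀ θ : ℂ, ∀ ξ : Fin N → Fin n → ℂ,
          (∀ i, ξ i ᵥ* (θ • (1 : Matrix (Fin n) (Fin n) ℂ) - Emat A H C h (lam i)) = 0) →
          (∃ i, ξ i ≠ 0) →
          (fun q : Fin N × Fin n => ∑ i, v i q.1 * ξ i q.2) ᵥ*
            cpx (Matrix.diagonal δ ⊗ₖ sampB A B h) ≠ 0)) := by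
  have : Nonempty (Fin n) := Fin.pos_iff_nonempty.mp hn
  have hΦ : IsUnit (Phis A H C W h) :=
    isUnit_of_isUnit_cpx (cpx_Phis A H C W h ▸ isUnit_networkMatrix hvli rfl hev hE)
  rw [controllable_iff_pbh hΦ, cpx_Phis, cpx_kronecker]
  exact ⟨fun hP => ⟨pbh_of_pbh_networkMatrix hP,
      fun i => pbh_add_smul_of_pbh_networkMatrix hP (hvli.ne_zero i) (hev i),
      (pbh_networkMatrix_iff hvli rfl hev).mp hP⟩,
    fun hc => (pbh_networkMatrix_iff hvli rfl hev).mpr hc.2.2⟩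

theorem stmt5
    (n m p N : ℕ) (hn : 0 < n) (hm : 0 < m) (hp : 0 < p) (hN : 0 < N)
    (h : ℝ) (hh : 0 < h)
    (A : Matrix (Fin n) (Fin n) ℝ) (B : Matrix (Fin n) (Fin p) ℝ)
    (C : Matrix (Fin m) (Fin n) ℝ) (H : Matrix (Fin n) (Fin m) ℝ)
    (W : Matrix (Fin N) (Fin N) ℝ)
    (δ : Fin N → ℝ) (hδ : ∀ i, δ i = 0 ∨ δ i = 1)
    (v : Fin N → Fin N → ℂ) (lam : Fin N → ℂ)
    (hvli : LinearIndependent ℂ v)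
    (hev : ∀ i, v i ᵥ* cpx W = lam i • v i)
    (hE : ∀ i, IsUnit (Emat A H C h (lam i))) :
    Controllable (Phis A H C W h) (Matrix.diagonal δ ⊗ₖ sampB A B h) ↔
      (PBH (cpx W) (cpx (Matrix.diagonal δ)) ∧
        (∀ i, PBH (Emat A H C h (lam i)) (cpx (sampB A B h))) ∧
        (∀ θ : ℂ, ∀ ξ : Fin N → Fin n → ℂ,
          (∀ i, ξ i ᵥ* (θ • (1 : Matrix (Fin n) (Fin n) ℂ) - Emat A H C h (lam i)) = 0) →
          (∃ i, ξ i ≠ 0) →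
          (fun q : Fin N × Fin n => ∑ i, v i q.1 * ξ i q.2) ᵥ*
            cpx (Matrix.diagonal δ ⊗ₖ sampB A B h) ≠ 0)) :=
  stmt5_general n m p N hn h A B C H W δ v lam hvli hev hE
end

section
/- Let a, b, c ∈ ℝ with a ≠ 0 and h > 0, and let Φ = a·I_N + c·W, Ψ = b·Δ, Φ_s = e^{ah}·I_N + (c/a)(e^{ah} − 1)·W, Ψ_s = (b/a)(e^{ah} − 1)·Δ. If the continuous-time pair (Φ, Ψ) satisfies the PBH condition, then the sampled-data pair (Φ_s, Ψ_s) is controllable. -/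
open Matrix
open scoped Kronecker

/-!
With `μ = (e^{ah} - 1) / a` the sampled pair is `(I + μ Φ, μ Ψ)`, and an affine change of the
state matrix with nonzero scalars preserves left eigenvectors, so the PBH condition passes to it.
The discrete-time Hautus test then gives controllability: the row vectors killing every `F^j G`
form a subspace invariant under `v ↦ v F`, which would contain a left eigenvector of `F` if it
were nonzero; so the ranges of the `F^j G` span the state space, by Noetherianity finitely many
of them already do, and then `F^k x` can be cancelled by `k` inputs.
-/

lemma Submodule.exists_biSup_range_eq_iSup {R M : Type*} [Ring R] [AddCommGroup M] [Module R M]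
    [IsNoetherian R M] (p : ℕ → Submodule R M) :
    ∃ k, ⨆ i ∈ Finset.range k, p i = ⨆ i, p i := by
  let P : ℕ →o Submodule R M :=
    ⟨fun k => ⨆ i ∈ Finset.range k, p i,
      fun _ _ hkl => biSup_mono fun _ hi => Finset.range_subset_range.2 hkl hi⟩
  obtain ⟨n, hn⟩ := monotone_stabilizes_iff_noetherian.mpr ‹_› P
  refine ⟨n, le_antisymm (iSup₂_le fun i _ => le_iSup p i) (iSup_le fun i => ?_)⟩
  change p i ≤ P n
  rw [hn (max n (i + 1)) (le_max_left _ _)]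
  exact le_biSup p (Finset.mem_range.2 (by omega))

lemma Matrix.iSup_range_mulVecLin_eq_top {K ι q r : Type*} [Field K] [Fintype q] [DecidableEq q]
    [Fintype r] (A : ι → Matrix q r K) (h : ∀ v : q → K, (∀ i, v ᵥ* A i = 0) → v = 0) :
    ⨆ i, LinearMap.range (A i).mulVecLin = ⊤ := by
  by_contra hne
  obtain ⟨f, hf, hle⟩ := Submodule.exists_le_ker_of_lt_top _ (lt_top_iff_ne_top.2 hne)
  obtain ⟨v, rfl⟩ := (dotProductEquiv K q).surjective f
  have hv : ∀ i, v ᵥ* A i = 0 := fun i => dotProduct_eq_zero_iff.1 fun u => by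
    rw [← dotProduct_mulVec]
    exact hle (le_iSup (fun i => LinearMap.range (A i).mulVecLin) i ⟨u, rfl⟩)
  exact hf (by rw [h v hv, map_zero])

lemma cpx_add {m n : Type*} (A B : Matrix m n ℝ) : cpx (A + B) = cpx A + cpx B :=
  Matrix.map_add _ Complex.ofReal_add A B

lemma cpx_smul {m n : Type*} (t : ℝ) (A : Matrix m n ℝ) : cpx (t • A) = (t : ℂ) • cpx A := by
  ext i j
  simp [cpx]

lemma cpx_one {n : Type*} [DecidableEq n] : cpx (1 : Matrix n n ℝ) = 1 :=
  Matrix.map_one _ Complex.ofReal_zero Complex.ofReal_one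

section Hautus

variable {q r : Type*} [Fintype q] [DecidableEq q] [Fintype r]

lemma PBH.eq_zero_of_vecMul_eq_smul {M : Matrix q q ℂ} {G : Matrix q r ℂ} (hPBH : PBH M G)
    {s : ℂ} {v : q → ℂ} (hM : v ᵥ* M = s • v) (hG : v ᵥ* G = 0) : v = 0 :=
  hPBH s v (by rw [vecMul_sub, vecMul_smul, vecMul_one, hM, sub_self]) hG

lemma PBH.smul_one_add_smul {M : Matrix q q ℂ} {G : Matrix q r ℂ} (hPBH : PBH M G) (s₀ : ℂ)
    {μ ν : ℂ} (hμ : μ ≠ 0) (hν : ν ≠ 0) : PBH (s₀ • 1 + μ • M) (ν • G) := by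
  intro s v hM hG
  refine hPBH ((s - s₀) / μ) v ?_ ?_
  · have : s • 1 - (s₀ • 1 + μ • M) = μ • (((s - s₀) / μ) • 1 - M) := by
      rw [smul_sub, smul_smul, mul_div_cancel₀ _ hμ, sub_smul]; abel
    rwa [this, vecMul_smul, smul_eq_zero, or_iff_right hμ] at hM
  · rwa [vecMul_smul, smul_eq_zero, or_iff_right hν] at hG

lemma PBH.eq_zero_of_forall_vecMul_pow_mul_eq_zero {M : Matrix q q ℂ} {G : Matrix q r ℂ}
    (hPBH : PBH M G) {v : q → ℂ} (hv : ∀ j : ℕ, v ᵥ* (M ^ j * G) = 0) : v = 0 := by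
  let S : Submodule ℂ (q → ℂ) := ⨅ j : ℕ, LinearMap.ker (M ^ j * G).vecMulLinear
  have mem_S (w : q → ℂ) : w ∈ S ↔ ∀ j : ℕ, w ᵥ* (M ^ j * G) = 0 := by simp [S]
  have hS : ∀ w ∈ S, M.vecMulLinear w ∈ S := fun w hw => (mem_S _).2 fun j => by
    rw [vecMulLinear_apply, vecMul_vecMul, ← Matrix.mul_assoc, ← pow_succ']
    exact (mem_S w).1 hw (j + 1)
  by_contra hv0
  have : Nontrivial S := Submodule.nontrivial_iff_ne_bot.2 <|
    (Submodule.ne_bot_iff S).2 ⟨v, (mem_S v).2 hv, hv0⟩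
  obtain ⟨s, hs⟩ := Module.End.exists_eigenvalue (M.vecMulLinear.restrict hS)
  obtain ⟨w, hw⟩ := hs.exists_hasEigenvector
  refine hw.2 (Subtype.ext (hPBH.eq_zero_of_vecMul_eq_smul (s := s) ?_ ?_))
  · simpa using congrArg Subtype.val hw.apply_eq_smul
  · simpa using (mem_S w).1 w.2 0

lemma PBH.real_eq_zero_of_forall_vecMul_pow_mul_eq_zero {F : Matrix q q ℝ} {G : Matrix q r ℝ}
    (hPBH : PBH (cpx F) (cpx G)) {v : q → ℝ} (hv : ∀ j : ℕ, v ᵥ* (F ^ j * G) = 0) : v = 0 := by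
  have hv' : Complex.ofRealHom ∘ v = 0 := hPBH.eq_zero_of_forall_vecMul_pow_mul_eq_zero fun j => by
    ext i
    change (_ ᵥ* ((F.map Complex.ofRealHom) ^ j * G.map Complex.ofRealHom)) i = 0
    rw [← Matrix.map_pow, ← Matrix.map_mul, ← RingHom.map_vecMul, hv j, Pi.zero_apply, map_zero]
  ext i
  simpa using congrFun hv' i

lemma controllable_of_biSup_range_eq_top {F : Matrix q q ℝ} {G : Matrix q r ℝ} {k : ℕ}
    (hk : ⨆ j ∈ Finset.range k, LinearMap.range (F ^ j * G).mulVecLin = ⊤) :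
    Controllable F G := by
  intro x
  obtain ⟨w, hw⟩ := (Submodule.mem_iSup_finset_iff_exists_sum _ (-(F ^ k *ᵥ x))).1
    (hk ▸ Submodule.mem_top)
  choose u hu using fun j => (w j).2
  refine ⟨k, fun j => u (k - 1 - j), ?_⟩
  rw [Fin.sum_univ_eq_sum_range (fun j => F ^ (k - 1 - j) *ᵥ (G *ᵥ u (k - 1 - j))),
    Finset.sum_range_reflect (fun j => F ^ j *ᵥ (G *ᵥ u j))]
  simp_rw [mulVec_mulVec]
  simp only [← mulVecLin_apply, hu, hw, add_neg_cancel]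

theorem controllable_of_PBH {F : Matrix q q ℝ} {G : Matrix q r ℝ} (hPBH : PBH (cpx F) (cpx G)) :
    Controllable F G := by
  obtain ⟨k, hk⟩ :=
    Submodule.exists_biSup_range_eq_iSup fun j => LinearMap.range (F ^ j * G).mulVecLin
  refine controllable_of_biSup_range_eq_top (hk.trans ?_)
  exact Matrix.iSup_range_mulVecLin_eq_top _ fun v hv =>
    hPBH.real_eq_zero_of_forall_vecMul_pow_mul_eq_zero hv

end Hautus

theorem stmt14_general
    (N : ℕ) (h a b c : ℝ) (hh : 0 < h) (ha : a ≠ 0)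
    (W : Matrix (Fin N) (Fin N) ℝ)
    (δ : Fin N → ℝ)
    (hPBH : PBH (cpx (a • (1 : Matrix (Fin N) (Fin N) ℝ) + c • W))
      (cpx (b • Matrix.diagonal δ))) :
    Controllable
      (Real.exp (a * h) • (1 : Matrix (Fin N) (Fin N) ℝ) +
        ((c / a) * (Real.exp (a * h) - 1)) • W)
      (((b / a) * (Real.exp (a * h) - 1)) • Matrix.diagonal δ) := by
  obtain ⟨μ, hμ, hexp⟩ : ∃ μ : ℝ, μ ≠ 0 ∧ Real.exp (a * h) = 1 + μ * a :=
    ⟨(Real.exp (a * h) - 1) / a,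
      div_ne_zero (sub_ne_zero.2 ((Real.exp_eq_one_iff _).not.2 (mul_ne_zero ha hh.ne'))) ha,
      by field_simp; ring⟩
  have hscale (x : ℝ) : x / a * (Real.exp (a * h) - 1) = μ * x := by
    rw [hexp, add_sub_cancel_left]; field_simp
  rw [hscale, hscale, hexp,
    show ((1 + μ * a) • 1 + (μ * c) • W : Matrix (Fin N) (Fin N) ℝ) =
      (1 : ℝ) • 1 + μ • (a • 1 + c • W) by module, mul_smul]
  apply controllable_of_PBH
  simp only [cpx_add, cpx_smul, cpx_one] at hPBH ⊢
  exact hPBH.smul_one_add_smul _ (Complex.ofReal_ne_zero.2 hμ) (Complex.ofReal_ne_zero.2 hμ)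

theorem stmt14
    (N : ℕ) (hN : 0 < N) (h a b c : ℝ) (hh : 0 < h) (ha : a ≠ 0)
    (W : Matrix (Fin N) (Fin N) ℝ)
    (δ : Fin N → ℝ) (hδ : ∀ i, δ i = 0 ∨ δ i = 1)
    (hPBH : PBH (cpx (a • (1 : Matrix (Fin N) (Fin N) ℝ) + c • W))
      (cpx (b • Matrix.diagonal δ))) :
    Controllable
      (Real.exp (a * h) • (1 : Matrix (Fin N) (Fin N) ℝ) +
        ((c / a) * (Real.exp (a * h) - 1)) • W)
      (((b / a) * (Real.exp (a * h) - 1)) • Matrix.diagonal δ) :=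
  stmt14_general N h a b c hh ha W δ hPBH
end
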